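/- Let G be a finite DAG with one source s and one sink t satisfying degree equality, and let R be a route in G. Then the underlying undirected graph of G − R (restricted to vertices incident to edges of G − R together with s and t) is disconnected if and only if G equals R, i.e., E(G) = E(R). -/

import Mathlib

open Finset

variable {V : Type*} [DecidableEq V] [Fintype V]

/-- The list of directed edges traversed by a list of vertices. -/
def edgeList (l : List V) : List (V × V) := l.zip l.tail

/-- In-degree of a vertex. -/
def indeg (E : Finset (V × V)) (v : V) : ℕ := (E.filter fun e => e.2 = v).card

/-- Out-degree of a vertex. -/
def outdeg (E : Finset (V × V)) (v : V) : ℕ := (E.filter fun e => e.1 = v).card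

/-- A directed graph with edge set `E` is acyclic: no directed cycle returns to a vertex. -/
def Acyclic (E : Finset (V × V)) : Prop :=
  ∀ (v : V) (l : List V), ¬ List.Chain (fun a b => (a, b) ∈ E) v (l ++ [v])

/-- A route: a directed path from `s` to `t` (with at least one edge), recorded as its
list of vertices. -/
def IsRoute (E : Finset (V × V)) (s t : V) (l : List V) : Prop :=
  l.Chain' (fun a b => (a, b) ∈ E) ∧ l.head? = some s ∧ l.getLast? = some t ∧ 2 ≤ l.length

/-- A route decomposition: a set of routes with pairwise disjoint edge sets whose union
is the whole edge set `E`. -/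
def IsRouteDecomp (E : Finset (V × V)) (s t : V) (R : Finset (List V)) : Prop :=
  (∀ l ∈ R, IsRoute E s t l) ∧
  (∀ l ∈ R, ∀ m ∈ R, l ≠ m → ∀ e, e ∈ edgeList l → e ∉ edgeList m) ∧
  (∀ e ∈ E, ∃ l ∈ R, e ∈ edgeList l)

/-- `s` is the unique source of the graph. -/
def UniqueSource (E : Finset (V × V)) (s : V) : Prop :=
  indeg E s = 0 ∧ ∀ v, indeg E v = 0 → v = s

/-- `t` is the unique sink of the graph. -/
def UniqueSink (E : Finset (V × V)) (t : V) : Prop :=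
  outdeg E t = 0 ∧ ∀ v, outdeg E v = 0 → v = t

/-- Degree equality: indegree equals outdegree at every inner vertex. -/
def DegreeEquality (E : Finset (V × V)) (s t : V) : Prop :=
  ∀ v, v ≠ s → v ≠ t → indeg E v = outdeg E v

/-- Undirected adjacency of a directed edge set. -/
def UAdj (E : Finset (V × V)) (a b : V) : Prop := (a, b) ∈ E ∨ (b, a) ∈ E

/-- The vertex set of the graph: `s`, `t`, and all vertices incident to an edge. -/
def VertsOf (E : Finset (V × V)) (s t : V) : Set V :=
  {v | v = s ∨ v = t ∨ ∃ e ∈ E, e.1 = v ∨ e.2 = v}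

/-- The underlying undirected graph is connected (on its vertex set together with `s,t`). -/
def UConnected (E : Finset (V × V)) (s t : V) : Prop :=
  ∀ a ∈ VertsOf E s t, ∀ b ∈ VertsOf E s t, Relation.ReflTransGen (UAdj E) a b

set_option linter.unusedSectionVars false

lemma edgeList_nil : edgeList ([] : List V) = [] := rfl

lemma edgeList_single (a : V) : edgeList [a] = [] := rfl

lemma edgeList_cons (a b : V) (r : List V) :
    edgeList (a :: b :: r) = (a, b) :: edgeList (b :: r) := rfl

lemma edgeList_map_snd (l : List V) : (edgeList l).map Prod.snd = l.tail := by
  match l with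
  | [] => rfl
  | [a] => rfl
  | a :: b :: r =>
    rw [edgeList_cons, List.map_cons, edgeList_map_snd (b :: r)]
    rfl

lemma edgeList_map_fst (l : List V) : (edgeList l).map Prod.fst = l.dropLast := by
  match l with
  | [] => rfl
  | [a] => rfl
  | a :: b :: r =>
    rw [edgeList_cons, List.map_cons, edgeList_map_fst (b :: r)]
    rfl

lemma edgeList_snd_inj {l : List V} (hnd : l.Nodup) {a b v : V}
    (ha : (a, v) ∈ edgeList l) (hb : (b, v) ∈ edgeList l) : a = b := by
  match l with
  | [] => exact absurd ha (by simp [edgeList_nil])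
  | [x] => exact absurd ha (by simp [edgeList_single])
  | x :: y :: r =>
    rw [edgeList_cons, List.mem_cons] at ha hb
    have hyr : y ∉ r := by
      have := hnd.of_cons
      exact (List.nodup_cons.mp this).1
    have htl : y ∉ (y :: r).tail := hyr
    rcases ha with ha | ha <;> rcases hb with hb | hb
    · rw [Prod.mk.injEq] at ha hb; rw [ha.1, hb.1]
    · exfalso; apply htl
      have := (Prod.mk.injEq _ _ _ _).mp ha
      rw [← edgeList_map_snd (y :: r)]
      exact List.mem_map.mpr ⟨(b, v), hb, this.2⟩
    · exfalso; apply htl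
      have := (Prod.mk.injEq _ _ _ _).mp hb
      rw [← edgeList_map_snd (y :: r)]
      exact List.mem_map.mpr ⟨(a, v), ha, this.2⟩
    · exact edgeList_snd_inj hnd.of_cons ha hb

lemma edgeList_fst_inj {l : List V} (hnd : l.Nodup) {a b v : V}
    (ha : (v, a) ∈ edgeList l) (hb : (v, b) ∈ edgeList l) : a = b := by
  match l with
  | [] => exact absurd ha (by simp [edgeList_nil])
  | [x] => exact absurd ha (by simp [edgeList_single])
  | x :: y :: r =>
    rw [edgeList_cons, List.mem_cons] at ha hb
    have hx : x ∉ y :: r := (List.nodup_cons.mp hnd).1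
    have hdl : x ∉ (y :: r).dropLast := fun h => hx (List.dropLast_subset _ h)
    rcases ha with ha | ha <;> rcases hb with hb | hb
    · rw [Prod.mk.injEq] at ha hb; rw [ha.2, hb.2]
    · exfalso; apply hdl
      have := (Prod.mk.injEq _ _ _ _).mp ha
      rw [← edgeList_map_fst (y :: r)]
      exact List.mem_map.mpr ⟨(v, b), hb, by rw [← this.1]⟩
    · exfalso; apply hdl
      have := (Prod.mk.injEq _ _ _ _).mp hb
      rw [← edgeList_map_fst (y :: r)]
      exact List.mem_map.mpr ⟨(v, a), ha, by rw [← this.1]⟩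
    · exact edgeList_fst_inj hnd.of_cons ha hb

lemma edgeList_mem_of_chain' {E : Finset (V × V)} {l : List V}
    (hc : l.Chain' (fun a b => (a, b) ∈ E)) {e : V × V} (he : e ∈ edgeList l) : e ∈ E := by
  match l with
  | [] => exact absurd he (by simp [edgeList_nil])
  | [x] => exact absurd he (by simp [edgeList_single])
  | x :: y :: r =>
    rw [edgeList_cons, List.mem_cons] at he
    rcases he with he | he
    · rw [he]; exact (List.isChain_cons_cons.mp hc).1
    · exact edgeList_mem_of_chain' (List.isChain_cons_cons.mp hc).2 he

lemma nodup_of_chain' {E : Finset (V × V)} (hA : Acyclic E) {l : List V}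
    (hc : l.Chain' (fun a b => (a, b) ∈ E)) : l.Nodup := by
  match l with
  | [] => exact List.nodup_nil
  | a :: r =>
    rw [List.nodup_cons]
    refine ⟨?_, nodup_of_chain' hA (hc.tail)⟩
    intro hmem
    obtain ⟨p, q, hpq⟩ := List.append_of_mem hmem
    have hpre : (a :: (p ++ [a])) <+: (a :: r) := by
      refine ⟨q, ?_⟩
      simp [hpq]
    exact hA a p (hc.prefix hpre)

lemma indeg_edgeList {l : List V} (hnd : l.Nodup) (v : V) :
    indeg (edgeList l).toFinset v = if v ∈ l.tail then 1 else 0 := by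
  unfold indeg
  split
  next h =>
    rw [← edgeList_map_snd] at h
    obtain ⟨e, he, hev⟩ := List.mem_map.mp h
    refine le_antisymm ?_ ?_
    · apply Finset.card_le_one.mpr
      intro a ha b hb
      rw [Finset.mem_filter, List.mem_toFinset] at ha hb
      have h1 : a = (a.1, v) := by rw [← ha.2]
      have h2 : b = (b.1, v) := by rw [← hb.2]
      have hab : a.1 = b.1 := edgeList_snd_inj hnd
        (show (a.1, v) ∈ edgeList l from h1 ▸ ha.1) (show (b.1, v) ∈ edgeList l from h2 ▸ hb.1)
      rw [h1, h2, hab]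
    · rw [Nat.one_le_iff_ne_zero, ← Nat.pos_iff_ne_zero, Finset.card_pos]
      exact ⟨e, Finset.mem_filter.mpr ⟨List.mem_toFinset.mpr he, hev⟩⟩
  next h =>
    rw [Finset.card_eq_zero, Finset.filter_eq_empty_iff]
    intro e he hev
    exact h (by rw [← edgeList_map_snd]; exact List.mem_map.mpr ⟨e, List.mem_toFinset.mp he, hev⟩)

lemma outdeg_edgeList {l : List V} (hnd : l.Nodup) (v : V) :
    outdeg (edgeList l).toFinset v = if v ∈ l.dropLast then 1 else 0 := by
  unfold outdeg
  split
  next h =>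
    rw [← edgeList_map_fst] at h
    obtain ⟨e, he, hev⟩ := List.mem_map.mp h
    refine le_antisymm ?_ ?_
    · apply Finset.card_le_one.mpr
      intro a ha b hb
      rw [Finset.mem_filter, List.mem_toFinset] at ha hb
      have h1 : a = (v, a.2) := by rw [← ha.2]
      have h2 : b = (v, b.2) := by rw [← hb.2]
      have hab : a.2 = b.2 := edgeList_fst_inj hnd
        (show (v, a.2) ∈ edgeList l from h1 ▸ ha.1) (show (v, b.2) ∈ edgeList l from h2 ▸ hb.1)
      rw [h1, h2, hab]
    · rw [Nat.one_le_iff_ne_zero, ← Nat.pos_iff_ne_zero, Finset.card_pos]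
      exact ⟨e, Finset.mem_filter.mpr ⟨List.mem_toFinset.mpr he, hev⟩⟩
  next h =>
    rw [Finset.card_eq_zero, Finset.filter_eq_empty_iff]
    intro e he hev
    exact h (by rw [← edgeList_map_fst]; exact List.mem_map.mpr ⟨e, List.mem_toFinset.mp he, hev⟩)

lemma acyclic_no_transGen {E : Finset (V × V)} (hA : Acyclic E) (v : V) :
    ¬ Relation.TransGen (fun a b => (a, b) ∈ E) v v := by
  intro h
  obtain ⟨u, huv, hvu⟩ := Relation.TransGen.head'_iff.mp h
  obtain ⟨lc, hchain, hlast⟩ := List.exists_isChain_cons_of_relationReflTransGen hvu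
  have hchain2 : List.Chain (fun a b => (a, b) ∈ E) v (u :: lc) := List.Chain.cons huv hchain
  have hne : (u :: lc) ≠ [] := List.cons_ne_nil _ _
  have hdecomp : u :: lc = (u :: lc).dropLast ++ [v] := by
    conv_lhs => rw [← List.dropLast_append_getLast hne]
    rw [hlast]
  rw [hdecomp] at hchain2
  exact hA v _ hchain2

open Classical in

noncomputable def fwdM (E : Finset (V × V)) (v : V) : ℕ :=
  (univ.filter fun u => Relation.TransGen (fun a b => (a, b) ∈ E) v u).card

open Classical in

noncomputable def bwdM (E : Finset (V × V)) (v : V) : ℕ :=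
  (univ.filter fun u => Relation.TransGen (fun a b => (a, b) ∈ E) u v).card

lemma fwdM_lt {E : Finset (V × V)} (hA : Acyclic E) {v w : V} (h : (v, w) ∈ E) :
    fwdM E w < fwdM E v := by
  classical
  unfold fwdM
  apply Finset.card_lt_card
  rw [Finset.ssubset_iff_of_subset]
  · refine ⟨w, ?_, ?_⟩
    · simp only [Finset.mem_filter, Finset.mem_univ, true_and]
      exact Relation.TransGen.single h
    · simp only [Finset.mem_filter, Finset.mem_univ, true_and]
      exact acyclic_no_transGen hA w
  · intro u hu
    simp only [Finset.mem_filter, Finset.mem_univ, true_and] at hu ⊢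
    exact Relation.TransGen.head h hu

lemma bwdM_lt {E : Finset (V × V)} (hA : Acyclic E) {v w : V} (h : (v, w) ∈ E) :
    bwdM E v < bwdM E w := by
  classical
  unfold bwdM
  apply Finset.card_lt_card
  rw [Finset.ssubset_iff_of_subset]
  · refine ⟨v, ?_, ?_⟩
    · simp only [Finset.mem_filter, Finset.mem_univ, true_and]
      exact Relation.TransGen.single h
    · simp only [Finset.mem_filter, Finset.mem_univ, true_and]
      exact acyclic_no_transGen hA v
  · intro u hu
    simp only [Finset.mem_filter, Finset.mem_univ, true_and] at hu ⊢
    exact Relation.TransGen.tail hu h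

lemma mem_out_of_pos {E : Finset (V × V)} {v : V} (h : 0 < outdeg E v) :
    ∃ w, (v, w) ∈ E := by
  obtain ⟨e, he⟩ := Finset.card_pos.mp h
  rw [Finset.mem_filter] at he
  exact ⟨e.2, by rw [← he.2]; exact he.1⟩

lemma mem_in_of_pos {E : Finset (V × V)} {v : V} (h : 0 < indeg E v) :
    ∃ w, (w, v) ∈ E := by
  obtain ⟨e, he⟩ := Finset.card_pos.mp h
  rw [Finset.mem_filter] at he
  exact ⟨e.1, by rw [← he.2]; exact he.1⟩

lemma outdeg_pos_of_mem {E : Finset (V × V)} {v w : V} (h : (v, w) ∈ E) : 0 < outdeg E v :=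
  Finset.card_pos.mpr ⟨(v, w), Finset.mem_filter.mpr ⟨h, rfl⟩⟩

lemma indeg_pos_of_mem {E : Finset (V × V)} {v w : V} (h : (v, w) ∈ E) : 0 < indeg E w :=
  Finset.card_pos.mpr ⟨(v, w), Finset.mem_filter.mpr ⟨h, rfl⟩⟩

/-- Every vertex with an outgoing edge in E' reaches t (undirectedly), where E' satisfies
degree equality, is a subset of an acyclic E with source s / sink t degrees. -/

lemma reach_sink {E E' : Finset (V × V)} (hsub : E' ⊆ E) (hA : Acyclic E)
    {s t : V} (hins : indeg E s = 0)
    (hDE' : ∀ v, v ≠ s → v ≠ t → indeg E' v = outdeg E' v) :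
    ∀ v w, (v, w) ∈ E' → Relation.ReflTransGen (UAdj E') v t := by
  intro v w hvw
  by_cases hwt : w = t
  · exact Relation.ReflTransGen.single (Or.inl (hwt ▸ hvw))
  · have hws : w ≠ s := by
      intro h
      have : 0 < indeg E s := indeg_pos_of_mem (hsub (h ▸ hvw))
      omega
    have hout : 0 < outdeg E' w := by
      rw [← hDE' w hws hwt]; exact indeg_pos_of_mem hvw
    obtain ⟨x, hwx⟩ := mem_out_of_pos hout
    have : fwdM E w < fwdM E v := fwdM_lt hA (hsub hvw)
    exact Relation.ReflTransGen.head (Or.inl hvw) (reach_sink hsub hA hins hDE' w x hwx)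
termination_by v => fwdM E v
decreasing_by exact this

/-- If s has no outgoing E'-edge, no inner vertex can have positive outdegree in E'. -/

lemma no_inner_out {E E' : Finset (V × V)} (hsub : E' ⊆ E) (hA : Acyclic E)
    {s t : V} (houtt : outdeg E t = 0)
    (hDE' : ∀ v, v ≠ s → v ≠ t → indeg E' v = outdeg E' v)
    (hs0 : outdeg E' s = 0) :
    ∀ v, v ≠ s → v ≠ t → ¬ (0 < outdeg E' v) := by
  intro v hvs hvt hout
  have hin : 0 < indeg E' v := by rw [hDE' v hvs hvt]; exact hout
  obtain ⟨c, hcv⟩ := mem_in_of_pos hin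
  have hct : c ≠ t := by
    intro h
    have : 0 < outdeg E t := outdeg_pos_of_mem (hsub (h ▸ hcv))
    omega
  have hcs : c ≠ s := by
    intro h
    have : 0 < outdeg E' s := outdeg_pos_of_mem (h ▸ hcv)
    omega
  have : bwdM E c < bwdM E v := bwdM_lt hA (hsub hcv)
  exact no_inner_out hsub hA houtt hDE' hs0 c hcs hct (outdeg_pos_of_mem hcv)
termination_by v => bwdM E v
decreasing_by exact this

lemma filter_sdiff' (p : V × V → Prop) [DecidablePred p] (E R : Finset (V × V)) :
    (E \ R).filter p = E.filter p \ R.filter p := by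
  ext e
  simp only [Finset.mem_filter, Finset.mem_sdiff]
  tauto

/-- `G - R` is disconnected if and only if `G = R`. -/
theorem deleteRoute_disconnected_iff_eq_route
    (E : Finset (V × V)) (s t : V)
    (hA : Acyclic E) (hst : s ≠ t)
    (hs : UniqueSource E s) (ht : UniqueSink E t)
    (hDE : DegreeEquality E s t)
    (l : List V) (hl : IsRoute E s t l) :
    ¬ UConnected (E \ (edgeList l).toFinset) s t ↔ E = (edgeList l).toFinset := by
  obtain ⟨hchain, hhead, hlast, hlen⟩ := hl
  set R := (edgeList l).toFinset with hR
  set E' := E \ R with hE'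
  have hnd : l.Nodup := nodup_of_chain' hA hchain
  have hRsub : R ⊆ E := fun e he => edgeList_mem_of_chain' hchain (List.mem_toFinset.mp he)
  -- structure of l
  obtain ⟨tl, rfl⟩ : ∃ tl, l = s :: tl := by
    cases l with
    | nil => simp at hlen
    | cons a tl =>
      have : a = s := by simpa using hhead
      exact ⟨tl, by rw [this]⟩
  have hglt : (s :: tl).getLast (List.cons_ne_nil _ _) = t := by
    have := List.getLast?_eq_getLast (l := s :: tl) (List.cons_ne_nil _ _)
    rw [this] at hlast
    exact Option.some_injective _ hlast
  -- membership equivalence for inner vertices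
  have hmemiff : ∀ v, v ≠ s → v ≠ t → (v ∈ (s :: tl).tail ↔ v ∈ (s :: tl).dropLast) := by
    intro v hvs hvt
    have h1 : v ∈ (s :: tl).tail ↔ v ∈ (s :: tl) := by
      simp only [List.tail_cons, List.mem_cons]
      exact ⟨Or.inr, fun h => h.resolve_left hvs⟩
    have h2 : v ∈ (s :: tl).dropLast ↔ v ∈ (s :: tl) := by
      conv_rhs => rw [← List.dropLast_append_getLast (List.cons_ne_nil s tl)]
      rw [List.mem_append, hglt]
      simp only [List.mem_singleton]
      exact ⟨Or.inl, fun h => h.resolve_right hvt⟩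
    rw [h1, h2]
  -- degree equality for E'
  have hin : ∀ v, indeg E' v = indeg E v - indeg R v := by
    intro v
    unfold indeg
    rw [hE', filter_sdiff', Finset.card_sdiff_of_subset (Finset.filter_subset_filter _ hRsub)]
  have hout : ∀ v, outdeg E' v = outdeg E v - outdeg R v := by
    intro v
    unfold outdeg
    rw [hE', filter_sdiff', Finset.card_sdiff_of_subset (Finset.filter_subset_filter _ hRsub)]
  have hDE' : ∀ v, v ≠ s → v ≠ t → indeg E' v = outdeg E' v := by
    intro v hvs hvt
    rw [hin, hout, hDE v hvs hvt, hR, indeg_edgeList hnd, outdeg_edgeList hnd,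
      if_congr (hmemiff v hvs hvt) rfl rfl]
  have hins' : indeg E s = 0 := hs.1
  have houtt : outdeg E t = 0 := ht.1
  constructor
  · intro hdis
    by_contra hne
    apply hdis
    have hne' : E'.Nonempty := by
      rw [Finset.nonempty_iff_ne_empty]
      intro h0
      exact hne (Finset.Subset.antisymm (Finset.sdiff_eq_empty_iff_subset.mp h0) hRsub)
    have hs_out : 0 < outdeg E' s := by
      rcases Nat.eq_zero_or_pos (outdeg E' s) with h0 | h
      · exfalso
        obtain ⟨e, he⟩ := hne'
        have he' : (e.1, e.2) ∈ E' := he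
        have hat : e.1 ≠ t := by
          intro h
          have : 0 < outdeg E t := outdeg_pos_of_mem (Finset.sdiff_subset (h ▸ he'))
          omega
        have has : e.1 ≠ s := by
          intro h
          have : 0 < outdeg E' s := outdeg_pos_of_mem (h ▸ he')
          omega
        exact no_inner_out Finset.sdiff_subset hA houtt hDE' h0 e.1 has hat
          (outdeg_pos_of_mem he')
      · exact h
    have conn : ∀ x ∈ VertsOf E' s t, Relation.ReflTransGen (UAdj E') x t := by
      intro x hx
      rcases hx with rfl | rfl | ⟨e, he, hx | hx⟩
      · obtain ⟨w, hw⟩ := mem_out_of_pos hs_out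
        exact reach_sink Finset.sdiff_subset hA hins' hDE' x w hw
      · exact Relation.ReflTransGen.refl
      · have he' : (x, e.2) ∈ E' := by rw [← hx]; exact he
        exact reach_sink Finset.sdiff_subset hA hins' hDE' x e.2 he'
      · have he' : (e.1, x) ∈ E' := by rw [← hx]; exact he
        exact Relation.ReflTransGen.head (Or.inr he')
          (reach_sink Finset.sdiff_subset hA hins' hDE' e.1 x he')
    have hsym : Symmetric (UAdj E') := fun x y h => h.elim Or.inr Or.inl
    intro x hx y hy
    exact (conn x hx).trans ((@Relation.ReflTransGen.stdSymm _ _ ⟨fun a b h => hsym h⟩).symm _ _ (conn y hy))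
  · intro heq hcon
    have hE'0 : E' = ∅ := by rw [hE', heq]; exact Finset.sdiff_self _
    have hsV : s ∈ VertsOf E' s t := Or.inl rfl
    have htV : t ∈ VertsOf E' s t := Or.inr (Or.inl rfl)
    rcases (hcon s hsV t htV).cases_head with h | ⟨c, hc, _⟩
    · exact hst h
    · rw [hE'0] at hc
      rcases hc with h | h <;> simp at h
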